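/- Let I1(t) = ∑_{d≥0} (∏_{j=1}^{d}(5j−3))^5 / (5^{5d}·(5d+1)!) · t^{5d+1} ∈ ℚ[[t]], and let D := t·d/dt. Then y := t·I1(t) satisfies the same Picard–Fuchs equation t^5 · D^5 y = 5^5 · (D−1)(D−2)(D−3)(D−4)(D−5) y. -/

import Mathlib

open PowerSeries

/-- The series `I1` of the FJRW I-function of the quintic. -/
noncomputable def fjrwI1 : PowerSeries ℚ :=
  PowerSeries.mk fun n =>
    if n % 5 = 1 then
      ((∏ j ∈ Finset.range (n / 5), (5 * (j : ℚ) + 2)) ^ 5) / (5 ^ (n - 1) * n.factorial)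
    else 0

/-- The Euler derivation `D = t d/dt` on `ℚ⟦t⟧`. -/
noncomputable def eulerD : PowerSeries ℚ → PowerSeries ℚ :=
  fun f => PowerSeries.X * PowerSeries.derivative ℚ f

/-- The operator `D - k`. -/
noncomputable def eulerE (k : ℚ) : PowerSeries ℚ → PowerSeries ℚ :=
  fun f => eulerD f - PowerSeries.C k * f

/-! The Euler operator acts diagonally on monomials, `D tⁿ = n tⁿ`, so comparing coefficients of
`tⁿ⁺⁵` turns the equation into the two-term recursion
`(5d+2)⁵ b_d = 5⁵ (5d+6)(5d+5)(5d+4)(5d+3)(5d+2) b_{d+1}` for the coefficients `b_d` of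
`t^(5d+2)` in `t·I1`, all other coefficients vanishing on both sides. The recursion is the ratio
of consecutive terms of the closed formula: one new factor `(5d+2)⁵` in the product and five new
factors in the factorial. -/

theorem coeff_eulerD (f : ℚ⟦X⟧) (n : ℕ) : coeff n (eulerD f) = n * coeff n f := by
  cases n with
  | zero => simp [eulerD]
  | succ m =>
    rw [eulerD, coeff_succ_X_mul, coeff_derivative]
    push_cast
    ring

theorem coeff_eulerD_iterate (k : ℕ) (f : ℚ⟦X⟧) (n : ℕ) :
    coeff n (eulerD^[k] f) = (n : ℚ) ^ k * coeff n f := by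
  induction k with
  | zero => simp
  | succ k ih => rw [Function.iterate_succ_apply', coeff_eulerD, ih, pow_succ']; ring

theorem coeff_eulerE (k : ℚ) (f : ℚ⟦X⟧) (n : ℕ) :
    coeff n (eulerE k f) = ((n : ℚ) - k) * coeff n f := by
  rw [eulerE, map_sub, coeff_eulerD, coeff_C_mul, sub_mul]

theorem coeff_X_pow_mul_eulerD_iterate (f : ℚ⟦X⟧) (m : ℕ) :
    coeff (m + 5) (X ^ 5 * eulerD^[5] f) = (m : ℚ) ^ 5 * coeff m f := by
  rw [coeff_X_pow_mul, coeff_eulerD_iterate]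

theorem coeff_X_pow_mul_eulerD_iterate_of_lt (f : ℚ⟦X⟧) {n : ℕ} (hn : n < 5) :
    coeff n (X ^ 5 * eulerD^[5] f) = 0 := by
  rw [coeff_X_pow_mul', if_neg (by omega)]

theorem coeff_picardFuchsOperator (f : ℚ⟦X⟧) (n : ℕ) :
    coeff n (5 ^ 5 * eulerE 1 (eulerE 2 (eulerE 3 (eulerE 4 (eulerE 5 f))))) =
      5 ^ 5 * (((n : ℚ) - 1) * (n - 2) * (n - 3) * (n - 4) * (n - 5)) * coeff n f := by
  rw [show (5 : ℚ⟦X⟧) ^ 5 = C (5 ^ 5 : ℚ) by rw [map_pow, map_ofNat], coeff_C_mul]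
  simp only [coeff_eulerE]
  ring

noncomputable def fjrwI1Coeff (d : ℕ) : ℚ :=
  (∏ j ∈ Finset.range d, (5 * (j : ℚ) + 2)) ^ 5 / (5 ^ (5 * d) * (5 * d + 1).factorial)

theorem coeff_X_mul_fjrwI1 (d : ℕ) : coeff (5 * d + 2) (X * fjrwI1) = fjrwI1Coeff d := by
  rw [coeff_succ_X_mul, fjrwI1, coeff_mk, if_pos (by omega),
    show (5 * d + 1) / 5 = d by omega, Nat.add_sub_cancel, fjrwI1Coeff]

theorem coeff_X_mul_fjrwI1_of_mod_ne {n : ℕ} (hn : n % 5 ≠ 2) : coeff n (X * fjrwI1) = 0 := by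
  cases n with
  | zero => exact coeff_zero_X_mul fjrwI1
  | succ n => rw [coeff_succ_X_mul, fjrwI1, coeff_mk, if_neg (by omega)]

theorem fjrwI1Coeff_succ (d : ℕ) :
    5 ^ 5 * ((5 * d + 6) * (5 * d + 5) * (5 * d + 4) * (5 * d + 3) * (5 * d + 2)) *
      fjrwI1Coeff (d + 1) = (5 * d + 2 : ℚ) ^ 5 * fjrwI1Coeff d := by
  have hfac : ((5 * (d + 1) + 1).factorial : ℚ) =
      (5 * d + 6) * (5 * d + 5) * (5 * d + 4) * (5 * d + 3) * (5 * d + 2) *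
        (5 * d + 1).factorial := by
    rw [show 5 * (d + 1) + 1 = 5 * d + 1 + 1 + 1 + 1 + 1 + 1 by ring]
    simp only [Nat.factorial_succ]
    push_cast
    ring
  rw [fjrwI1Coeff, fjrwI1Coeff, hfac, Finset.prod_range_succ]
  have : ((5 * d + 1).factorial : ℚ) ≠ 0 := by positivity
  field_simp
  ring

theorem stmt_13 :
    PowerSeries.X ^ 5 * eulerD^[5] (PowerSeries.X * fjrwI1) =
      5 ^ 5 * eulerE 1 (eulerE 2 (eulerE 3 (eulerE 4 (eulerE 5
        (PowerSeries.X * fjrwI1))))) := by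
  ext n
  rw [coeff_picardFuchsOperator]
  rcases lt_or_ge n 5 with hn | hn
  · rw [coeff_X_pow_mul_eulerD_iterate_of_lt _ hn]
    by_cases h2 : n = 2
    · subst h2; norm_num
    · rw [coeff_X_mul_fjrwI1_of_mod_ne (by omega), mul_zero]
  · obtain ⟨m, rfl⟩ := Nat.exists_eq_add_of_le' hn
    rw [coeff_X_pow_mul_eulerD_iterate]
    by_cases hm : m % 5 = 2
    · obtain ⟨d, rfl⟩ : ∃ d, m = 5 * d + 2 := ⟨m / 5, by omega⟩
      rw [show 5 * d + 2 + 5 = 5 * (d + 1) + 2 by ring, coeff_X_mul_fjrwI1, coeff_X_mul_fjrwI1]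
      push_cast
      rw [← fjrwI1Coeff_succ]
      ring
    · rw [coeff_X_mul_fjrwI1_of_mod_ne hm, coeff_X_mul_fjrwI1_of_mod_ne (by omega)]
      ring
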